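/- Let V be a finite vertex set and let F̃ be a finite set of non-diagonal elements of Sym2(V) (i.e. a set of edges of a simple graph on V). Then k(F̃) = |V| − 2 if and only if either |F̃| = 2, or |F̃| = 3 and the three edges of F̃ form a triangle (i.e. there are three distinct vertices u, v, w with F̃ = {{u,v}, {v,w}, {u,w}}). -/

import Mathlib

open Finset

/-- Number of connected components of the simple graph on `V` with edge set `s`
(isolated vertices count as components). -/
noncomputable def numComponents (V : Type*) (s : Set (Sym2 V)) : ℕ :=
  Nat.card (SimpleGraph.fromEdgeSet s).ConnectedComponent

/-!
Adding an edge to a graph keeps the number of components if its endpoints are already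
connected and lowers it by exactly one otherwise. So one edge leaves `|V| - 1` components and
two distinct edges `|V| - 2`. Conversely, build `F̃` edge by edge: the count reaches `|V| - 2`
either through two edges that each merge two components, or through two edges forming a path
`x - w - y` closed by the edge `xy`. Nothing can be added to such a triangle without a further
merge, since any two connected vertices of a triangle are joined by one of its edges.
-/

namespace SimpleGraph

variable {V : Type*} {G : SimpleGraph V} {u v a b : V}

theorem reachable_sup_edge_iff :
    (G ⊔ edge u v).Reachable a b ↔
      G.Reachable a b ∨ G.Reachable a u ∧ G.Reachable v b ∨
        G.Reachable a v ∧ G.Reachable u b := by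
  constructor
  · rintro ⟨p⟩
    induction p with
    | nil => exact .inl .rfl
    | cons hadj _ ih =>
      rcases hadj with hadj | hadj
      · have h := hadj.reachable
        rcases ih with h' | ⟨h₁, h₂⟩ | ⟨h₁, h₂⟩
        · exact .inl (h.trans h')
        · exact .inr (.inl ⟨h.trans h₁, h₂⟩)
        · exact .inr (.inr ⟨h.trans h₁, h₂⟩)
      · obtain ⟨⟨rfl, rfl⟩ | ⟨rfl, rfl⟩, -⟩ := (edge_adj ..).mp hadj
        · rcases ih with h | ⟨h₁, h₂⟩ | ⟨-, h⟩
          · exact .inr (.inl ⟨.rfl, h⟩)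
          · exact .inl (h₁.symm.trans h₂)
          · exact .inl h
        · rcases ih with h | ⟨-, h⟩ | ⟨h₁, h₂⟩
          · exact .inr (.inr ⟨.rfl, h⟩)
          · exact .inl h
          · exact .inl (h₁.symm.trans h₂)
  · have huv : (G ⊔ edge u v).Reachable u v := by
      obtain rfl | h := eq_or_ne u v
      · exact .rfl
      · exact Adj.reachable (.inr ((edge_adj ..).mpr ⟨.inl ⟨rfl, rfl⟩, h⟩))
    have hG {p q : V} (h : G.Reachable p q) : (G ⊔ edge u v).Reachable p q := h.mono le_sup_left
    rintro (h | ⟨h₁, h₂⟩ | ⟨h₁, h₂⟩)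
    · exact hG h
    · exact (hG h₁).trans (huv.trans (hG h₂))
    · exact (hG h₁).trans (huv.symm.trans (hG h₂))

theorem card_connectedComponent_sup_edge_of_reachable (h : G.Reachable u v) :
    Nat.card (G ⊔ edge u v).ConnectedComponent = Nat.card G.ConnectedComponent := by
  have : (G ⊔ edge u v).Reachable = G.Reachable := by
    ext a b
    rw [reachable_sup_edge_iff]
    grind [Reachable.trans, Reachable.symm]
  -- `ConnectedComponent` is `Quot Reachable` by definition.
  exact congrArg (fun r ↦ Nat.card (Quot r)) this

theorem card_connectedComponent_sup_edge_add_one [Finite V] (h : ¬G.Reachable u v) :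
    Nat.card (G ⊔ edge u v).ConnectedComponent + 1 = Nat.card G.ConnectedComponent := by
  classical
  let φ := ConnectedComponent.map (Hom.ofLE (le_sup_left : G ≤ G ⊔ edge u v))
  let cv := G.connectedComponentMk v
  -- `φ` identifies exactly the components of `u` and `v`, so it is bijective off that of `v`.
  let ψ : {c // c ≠ cv} → (G ⊔ edge u v).ConnectedComponent := fun c ↦ φ c
  have hψ : ψ.Bijective := by
    refine ⟨?_, ?_⟩
    · rintro ⟨c, hc⟩ ⟨d, hd⟩ hcd
      induction c using ConnectedComponent.ind with | h a => ?_
      induction d using ConnectedComponent.ind with | h b => ?_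
      simp only [ψ, φ, cv, ne_eq, ConnectedComponent.eq, ConnectedComponent.map_mk,
        Hom.ofLE_apply, reachable_sup_edge_iff] at hc hd hcd
      rcases hcd with hab | ⟨-, hvb⟩ | ⟨hav, -⟩
      · exact Subtype.ext (ConnectedComponent.sound hab)
      · exact absurd hvb.symm hd
      · exact absurd hav hc
    · intro c
      obtain ⟨d, rfl⟩ := ConnectedComponent.surjective_map_ofLE le_sup_left c
      by_cases hd : d = cv
      · refine ⟨⟨G.connectedComponentMk u, fun h' ↦ h (ConnectedComponent.eq.mp h')⟩, ?_⟩
        simp only [ψ, φ, hd, cv, ConnectedComponent.map_mk, Hom.ofLE_apply, ConnectedComponent.eq,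
          reachable_sup_edge_iff]
        exact .inr (.inl ⟨.rfl, .rfl⟩)
      · exact ⟨⟨d, hd⟩, rfl⟩
  rw [← Nat.card_eq_of_bijective ψ hψ, ← Finite.card_option]
  exact Nat.card_congr (Equiv.optionSubtypeNe cv)

theorem card_connectedComponent_bot :
    Nat.card (⊥ : SimpleGraph V).ConnectedComponent = Nat.card V :=
  (Nat.card_congr (Equiv.ofBijective (⊥ : SimpleGraph V).connectedComponentMk
    ⟨fun _ _ h ↦ reachable_bot.mp (ConnectedComponent.eq.mp h), Quot.mk_surjective⟩)).symm

theorem fromEdgeSet_insert (x y : V) (s : Set (Sym2 V)) :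
    fromEdgeSet (insert s(x, y) s) = fromEdgeSet s ⊔ edge x y := by
  rw [Set.insert_eq, fromEdgeSet_union, sup_comm]
  rfl

theorem reachable_fromEdgeSet_singleton_iff {e : Sym2 V} :
    (fromEdgeSet {e}).Reachable a b ↔ a = b ∨ s(a, b) = e := by
  induction e using Sym2.ind with | h c d => ?_
  rw [← LawfulSingleton.insert_empty_eq, fromEdgeSet_insert, fromEdgeSet_empty,
    reachable_sup_edge_iff]
  simp only [reachable_bot, Sym2.eq_iff]
  grind

theorem exists_middle_of_reachable_fromEdgeSet_pair [DecidableEq V] {e f : Sym2 V}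
    (hr : (fromEdgeSet {e, f}).Reachable a b) (hab : a ≠ b) (he : s(a, b) ≠ e)
    (hf : s(a, b) ≠ f) :
    ∃ w, a ≠ w ∧ b ≠ w ∧ ({e, f} : Finset (Sym2 V)) = {s(b, w), s(a, w)} := by
  have key {x y : V} (hxy : s(a, b) ≠ s(x, y)) (hx : a = x ∨ s(a, x) = f)
      (hy : y = b ∨ s(y, b) = f) :
      ∃ w, a ≠ w ∧ b ≠ w ∧ ({s(x, y), f} : Finset (Sym2 V)) = {s(b, w), s(a, w)} := by
    rcases hx with rfl | rfl <;> rcases hy with rfl | hy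
    · exact absurd rfl hxy
    · subst hy
      refine ⟨y, ?_, ?_, ?_⟩
      · rintro rfl; exact hf rfl
      · rintro rfl; exact hxy rfl
      · rw [Finset.pair_comm, Sym2.eq_swap (a := b)]
    · refine ⟨x, ?_, ?_, ?_⟩
      · rintro rfl; exact hxy rfl
      · rintro rfl; exact hf rfl
      · rw [Sym2.eq_swap (a := x)]
    · rw [Sym2.eq_iff] at hy
      rcases hy with ⟨rfl, rfl⟩ | ⟨rfl, rfl⟩
      · exact absurd Sym2.eq_swap hxy
      · exact absurd rfl hab
  induction e using Sym2.ind with | h x y => ?_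
  rw [fromEdgeSet_insert, reachable_sup_edge_iff] at hr
  simp only [reachable_fromEdgeSet_singleton_iff] at hr
  rcases hr with hr | ⟨hx, hy⟩ | ⟨hx, hy⟩
  · exact absurd (hr.resolve_left hab) hf
  · exact key he hx hy
  · rw [Sym2.eq_swap (a := x)]
    exact key (by rwa [Sym2.eq_swap (a := y)]) hx hy

theorem mk_mem_of_reachable_fromEdgeSet_triangle {w : V}
    (hr : (fromEdgeSet {s(u, v), s(v, w), s(u, w)}).Reachable a b) (hab : a ≠ b) :
    s(a, b) ∈ ({s(u, v), s(v, w), s(u, w)} : Set (Sym2 V)) := by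
  have hvert {x y : V} (h : (fromEdgeSet {s(u, v), s(v, w), s(u, w)}).Reachable x y)
      (hxy : x ≠ y) : x = u ∨ x = v ∨ x = w := by
    obtain ⟨z, hz⟩ := mem_support_of_reachable hxy h
    simp only [fromEdgeSet_adj, Set.mem_insert_iff, Set.mem_singleton_iff, Sym2.eq_iff] at hz
    grind
  rcases hvert hr hab with rfl | rfl | rfl <;>
    rcases hvert hr.symm hab.symm with rfl | rfl | rfl <;> simp_all [Sym2.eq_swap]

end SimpleGraph

open SimpleGraph

section

variable {V : Type*}

theorem numComponents_empty : numComponents V ∅ = Nat.card V := by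
  rw [numComponents, fromEdgeSet_empty, card_connectedComponent_bot]

theorem numComponents_le_of_subset [Finite V] {s t : Set (Sym2 V)} (h : s ⊆ t) :
    numComponents V t ≤ numComponents V s :=
  ConnectedComponent.card_le_card_of_le (fromEdgeSet_mono h)

theorem numComponents_insert_of_reachable {s : Set (Sym2 V)} {x y : V}
    (h : (fromEdgeSet s).Reachable x y) :
    numComponents V (insert s(x, y) s) = numComponents V s := by
  rw [numComponents, fromEdgeSet_insert, card_connectedComponent_sup_edge_of_reachable h]
  rfl

theorem numComponents_insert_add_one [Finite V] {s : Set (Sym2 V)} {x y : V}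
    (h : ¬(fromEdgeSet s).Reachable x y) :
    numComponents V (insert s(x, y) s) + 1 = numComponents V s := by
  rw [numComponents, fromEdgeSet_insert, card_connectedComponent_sup_edge_add_one h]
  rfl

theorem numComponents_singleton [Finite V] {e : Sym2 V} (he : ¬e.IsDiag) :
    numComponents V {e} + 1 = Nat.card V := by
  induction e using Sym2.ind with | h a b => ?_
  rw [← LawfulSingleton.insert_empty_eq, numComponents_insert_add_one, numComponents_empty]
  rwa [fromEdgeSet_empty, reachable_bot]

theorem numComponents_pair [Finite V] {e f : Sym2 V} (he : ¬e.IsDiag) (hf : ¬f.IsDiag)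
    (hef : e ≠ f) : numComponents V {e, f} + 2 = Nat.card V := by
  induction e using Sym2.ind with | h a b => ?_
  induction f using Sym2.ind with | h c d => ?_
  have hnr : ¬(fromEdgeSet {s(c, d)}).Reachable a b := by
    rw [reachable_fromEdgeSet_singleton_iff]
    exact not_or.mpr ⟨he, hef⟩
  have := numComponents_insert_add_one hnr
  have := numComponents_singleton hf
  omega

theorem numComponents_triangle [Finite V] {u v w : V} (huv : u ≠ v) (hvw : v ≠ w)
    (huw : u ≠ w) :
    numComponents V {s(u, v), s(v, w), s(u, w)} + 2 = Nat.card V := by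
  have hr : (fromEdgeSet {s(v, w), s(u, w)}).Reachable u v := by
    have huw' : (fromEdgeSet {s(v, w), s(u, w)}).Adj u w := by simp [huw]
    have hwv : (fromEdgeSet {s(v, w), s(u, w)}).Adj w v := by simp [hvw.symm, Sym2.eq_swap]
    exact huw'.reachable.trans hwv.reachable
  rw [numComponents_insert_of_reachable hr, numComponents_pair (by simpa) (by simpa)]
  simp [huv.symm, hvw]

theorem exists_eq_singleton_of_numComponents_add_one_eq [Finite V] {F : Finset (Sym2 V)}
    (hnd : ∀ e ∈ F, ¬e.IsDiag) (h : numComponents V ↑F + 1 = Nat.card V) :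
    ∃ e, F = {e} := by
  obtain rfl | hF := F.eq_empty_or_nonempty
  · simp [numComponents_empty] at h
  refine hF.exists_eq_singleton_or_nontrivial.resolve_right ?_
  rintro ⟨e, he, f, hf, hef⟩
  have hle : numComponents V ↑F ≤ numComponents V {e, f} :=
    numComponents_le_of_subset (Set.insert_subset he (Set.singleton_subset_iff.mpr hf))
  have := numComponents_pair (hnd e he) (hnd f hf) hef
  omega

theorem card_eq_two_or_triangle_of_numComponents_add_two_eq [Finite V] [DecidableEq V]
    {F : Finset (Sym2 V)} (hnd : ∀ e ∈ F, ¬e.IsDiag)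
    (h : numComponents V ↑F + 2 = Nat.card V) :
    F.card = 2 ∨ F.card = 3 ∧
      ∃ u v w : V, u ≠ v ∧ v ≠ w ∧ u ≠ w ∧ F = {s(u, v), s(v, w), s(u, w)} := by
  induction F using Finset.induction_on with
  | empty => simp [numComponents_empty] at h
  | @insert e F he ih =>
    induction e using Sym2.ind with | h x y => ?_
    have hxy : x ≠ y := hnd _ (mem_insert_self _ _)
    have hnd' : ∀ e ∈ F, ¬e.IsDiag := fun e he ↦ hnd e (mem_insert_of_mem he)
    rw [coe_insert] at h
    by_cases hr : (fromEdgeSet ↑F).Reachable x y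
    · rw [numComponents_insert_of_reachable hr] at h
      rcases ih hnd' h with hF | ⟨-, u, v, w, -, -, -, rfl⟩
      · obtain ⟨e, f, -, rfl⟩ := card_eq_two.mp hF
        obtain ⟨w, hxw, hyw, hef⟩ := exists_middle_of_reachable_fromEdgeSet_pair
          (by simpa using hr) hxy (by rintro rfl; simp at he) (by rintro rfl; simp at he)
        exact .inr ⟨by rw [card_insert_of_notMem he, hF], x, y, w, hxy, hyw, hxw, by rw [hef]⟩
      · have := mk_mem_of_reachable_fromEdgeSet_triangle (by simpa using hr) hxy
        exact absurd (by simpa using this) he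
    · have := numComponents_insert_add_one hr
      obtain ⟨f, rfl⟩ := exists_eq_singleton_of_numComponents_add_one_eq hnd' (by omega)
      exact .inl (by rw [card_insert_of_notMem he, card_singleton])

end

/-- For a finite set `Fs` of non-diagonal elements of `Sym2 V` over a
finite vertex set `V`, `k(Fs) = |V| - 2` if and only if either `|Fs| = 2`, or `|Fs| = 3`
and the three edges of `Fs` form a triangle. -/
theorem components_eq_card_sub_two_iff {V : Type*} [Fintype V] [DecidableEq V]
    (Fs : Finset (Sym2 V))
    (hnd : ∀ e ∈ Fs, ¬ e.IsDiag) :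
    (numComponents V (↑Fs : Set (Sym2 V)) : ℤ) = (Fintype.card V : ℤ) - 2 ↔
      (Fs.card = 2 ∨
        (Fs.card = 3 ∧ ∃ u v w : V, u ≠ v ∧ v ≠ w ∧ u ≠ w ∧
          Fs = {s(u, v), s(v, w), s(u, w)})) := by
  rw [← Nat.card_eq_fintype_card]
  refine ⟨fun h ↦ card_eq_two_or_triangle_of_numComponents_add_two_eq hnd (by omega), ?_⟩
  rintro (hF | ⟨-, u, v, w, huv, hvw, huw, rfl⟩)
  · obtain ⟨e, f, hef, rfl⟩ := card_eq_two.mp hF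
    have := numComponents_pair (hnd e (by simp)) (hnd f (by simp)) hef
    push_cast
    omega
  · have := numComponents_triangle huv hvw huw
    push_cast
    omega
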